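/- The map $(t^1,t^2,t^3,t^4) \mapsto (y^1,y^2,y^3,y^4)$ given by $y^1 = t^1$, $y^2 = t^2 + \frac{(t^1)^2}{8}$, $y^3 = t^3 t^4$, $y^4 = (t^4)^4$ transforms the bilinear form $\eta^{ij} = \partial g^{ij}/\partial y^2$ (where $g_{(4)}$ is the explicit $B_4$ matrix with entries $g^{11}=4y^1$, $g^{12}=8y^2$, $g^{13}=12y^3$, $g^{14}=16y^4$, $g^{22}=4y^1y^2+12y^3$, $g^{23}=8y^1y^3+16y^4$, $g^{24}=12y^1y^4$, $g^{33}=4y^2y^3+12y^1y^4$, $g^{34}=8y^2y^4$, $g^{44}=4y^3y^4$, symmetric) into a constant matrix in the coordinates $t^1,\dots,t^4$ on the locus $t^4 \ne 0$. That is, $\tilde\eta^{\alpha\beta} := \sum_{i,j}\frac{\partial t^\alpha}{\partial y^i}\frac{\partial t^\beta}{\partial y^j}\,\eta^{ij}$ has constant entries. -/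

import Mathlib

/-!
The Jacobian `J = ∂y/∂t` of the coordinate change is polynomial in `t`, and so is `η` along it;
a direct computation gives `η(y(t)) = J c Jᵀ` for a constant matrix `c`. Since `det J = 4 (t⁴)⁴`,
`J` is invertible off `t⁴ = 0`, and there `J⁻¹ η (J⁻¹)ᵀ = c`.
-/

/-- Partial derivative in the `i`-th coordinate direction. -/
noncomputable def pd {n : ℕ} (i : Fin n) (f : (Fin n → ℝ) → ℝ) : (Fin n → ℝ) → ℝ :=
  fun x => fderiv ℝ f x (Pi.single i 1)

/-- The explicit `B_4` orbit-space metric `g_{(4)}` in the coordinates `y^1, …, y^4`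
(`y i` stands for `y^{i+1}`). -/
noncomputable def g4 (y : Fin 4 → ℝ) : Matrix (Fin 4) (Fin 4) ℝ :=
  !![4*y 0,  8*y 1,              12*y 2,                    16*y 3;
     8*y 1,  4*y 0*y 1+12*y 2,   8*y 0*y 2+16*y 3,          12*y 0*y 3;
     12*y 2, 8*y 0*y 2+16*y 3,   4*y 1*y 2+12*y 0*y 3,      8*y 1*y 3;
     16*y 3, 12*y 0*y 3,         8*y 1*y 3,                 4*y 2*y 3]

/-- `η^{ij} = ∂g_{(4)}^{ij}/∂y^2`. -/
noncomputable def eta4 (y : Fin 4 → ℝ) : Matrix (Fin 4) (Fin 4) ℝ :=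
  fun i j => fderiv ℝ (fun z : Fin 4 → ℝ => g4 z i j) y (Pi.single 1 1)

/-- The change of coordinates `t ↦ y` of the `B_{2,4}` structure:
`y^1 = t^1`, `y^2 = t^2 + (t^1)²/8`, `y^3 = t^3 t^4`, `y^4 = (t^4)⁴`. -/
noncomputable def phi4 (t : Fin 4 → ℝ) : Fin 4 → ℝ :=
  ![t 0, t 1 + (t 0) ^ 2 / 8, t 2 * t 3, (t 3) ^ 4]

/-- Jacobian matrix `J_{iα} = ∂y^i/∂t^α` of `phi4`. -/
noncomputable def J4 (t : Fin 4 → ℝ) : Matrix (Fin 4) (Fin 4) ℝ :=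
  fun i a => fderiv ℝ (fun s : Fin 4 → ℝ => phi4 s i) t (Pi.single a 1)

open Matrix

theorem Matrix.inv_mul_mul_transpose_mul_inv_transpose {n α : Type*} [Fintype n] [DecidableEq n]
    [CommRing α] (A c : Matrix n n α) (hA : IsUnit A.det) :
    A⁻¹ * (A * c * Aᵀ) * A⁻¹ᵀ = c := by
  rw [transpose_nonsing_inv, Matrix.mul_assoc A, nonsing_inv_mul_cancel_left _ _ hA,
    mul_nonsing_inv_cancel_right _ _ (by rwa [det_transpose])]

def eta4Flat : Matrix (Fin 4) (Fin 4) ℝ :=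
  !![0, 8, 0, 0; 8, 0, 0, 0; 0, 0, 0, 2; 0, 0, 2, 0]

theorem J4_eq (t : Fin 4 → ℝ) :
    J4 t = !![1, 0, 0, 0; t 0 / 4, 1, 0, 0; 0, 0, t 3, t 2; 0, 0, 0, 4 * t 3 ^ 3] := by
  ext i a
  fin_cases i <;> fin_cases a <;>
    simp (disch := fun_prop) [J4, phi4, div_eq_mul_inv, fderiv_fun_mul, fderiv_fun_add,
      fderiv_fun_pow, fderiv_apply, Pi.single_apply]
  ring

theorem eta4_eq (y : Fin 4 → ℝ) :
    eta4 y = !![0, 8, 0, 0; 8, 4 * y 0, 0, 0; 0, 0, 4 * y 2, 8 * y 3; 0, 0, 8 * y 3, 0] := by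
  ext i j
  fin_cases i <;> fin_cases j <;>
    simp (disch := fun_prop) [eta4, g4, fderiv_fun_mul, fderiv_fun_add, fderiv_apply,
      Pi.single_apply, mul_comm]

theorem det_J4 (t : Fin 4 → ℝ) : (J4 t).det = 4 * t 3 ^ 4 := by
  rw [J4_eq]
  simp [det_succ_row_zero, Fin.sum_univ_succ]
  ring

theorem J4_mul_eta4Flat_mul_transpose (t : Fin 4 → ℝ) :
    J4 t * eta4Flat * (J4 t)ᵀ = eta4 (phi4 t) := by
  rw [J4_eq, eta4_eq, eta4Flat]
  ext i j
  fin_cases i <;> fin_cases j <;>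
    simp [mul_apply, Fin.sum_univ_four, phi4] <;> ring

/-- The listed coordinates are flat for `η`: the pullback
`η̃^{αβ} = ∑_{i,j} (∂t^α/∂y^i)(∂t^β/∂y^j) η^{ij}` (with `∂t/∂y = J⁻¹`) is a constant
matrix on the locus `t^4 ≠ 0`. -/
theorem stmt11 :
    ∃ c : Matrix (Fin 4) (Fin 4) ℝ, ∀ t : Fin 4 → ℝ, t 3 ≠ 0 →
      (J4 t)⁻¹ * eta4 (phi4 t) * ((J4 t)⁻¹).transpose = c := by
  refine ⟨eta4Flat, fun t ht => ?_⟩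
  have hJ : IsUnit (J4 t).det := by
    rw [det_J4]
    exact (mul_ne_zero four_ne_zero (pow_ne_zero 4 ht)).isUnit
  rw [← J4_mul_eta4Flat_mul_transpose]
  exact inv_mul_mul_transpose_mul_inv_transpose _ _ hJ
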